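/- Let A and B be commutative semisimple Fréchet algebras. A continuous linear map T : A × B → A × B is a multiplier of A × B if and only if there exist a multiplier T₁ of A and a multiplier T₂ of B such that T(a,b) = (T₁ a, T₂ b) for all a ∈ A and b ∈ B. In other words, M(A ⊕ B) = M(A) ⊕ M(B). -/

import Mathlib

open WeakDual Filter Topology Bornology

/-- A *multiplier* of a commutative topological `ℂ`-algebra `A` is a continuous linear map
`T : A → A` such that `T (a * b) = a * T b` for all `a b : A`. -/
def IsMultiplier {A : Type*} [NonUnitalCommRing A] [Module ℂ A] [TopologicalSpace A]
    (T : A →L[ℂ] A) : Prop :=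
  ∀ a b : A, T (a * b) = a * T b

/-- A commutative topological `ℂ`-algebra is *semisimple* if the intersection of the kernels of
all its characters is `{0}`. -/
def IsSemisimple (A : Type*) [NonUnitalCommRing A] [Module ℂ A] [TopologicalSpace A] : Prop :=
  ∀ a : A, (∀ φ : characterSpace ℂ A, φ a = 0) → a = 0

/-- A (not necessarily unital) commutative topological `ℂ`-algebra is a *Fréchet algebra* if it
is complete and its topology is generated by a countable increasing family of submultiplicative
seminorms (hence it is a complete metrizable locally convex algebra). -/
def IsFrechetAlgebra (A : Type*) [NonUnitalCommRing A] [Module ℂ A]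
    [UniformSpace A] : Prop :=
  ∃ p : ℕ → Seminorm ℂ A, WithSeminorms p ∧ Monotone p ∧
    (∀ (ℓ : ℕ) (x y : A), p ℓ (x * y) ≤ p ℓ x * p ℓ y) ∧ CompleteSpace A

lemma IsSemisimple.eq_zero_of_forall_mul_eq_zero {A : Type*} [NonUnitalCommRing A] [Module ℂ A]
    [TopologicalSpace A] (hA : IsSemisimple A) (x : A) (hx : ∀ a : A, a * x = 0) : x = 0 := by
  refine hA x fun φ => ?_
  obtain ⟨a, ha⟩ : ∃ a : A, φ a ≠ 0 := by
    by_contra! h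
    exact φ.prop.1 (ContinuousLinearMap.ext h)
  have hφ : φ a * φ x = 0 := by rw [← map_mul, hx, map_zero]
  exact (mul_eq_zero.mp hφ).resolve_left ha

namespace IsMultiplier

variable {A B : Type*} [NonUnitalCommRing A] [Module ℂ A] [TopologicalSpace A]
  [NonUnitalCommRing B] [Module ℂ B] [TopologicalSpace B]

open ContinuousLinearMap

lemma prodMap {T₁ : A →L[ℂ] A} {T₂ : B →L[ℂ] B} (h₁ : IsMultiplier T₁)
    (h₂ : IsMultiplier T₂) : IsMultiplier (T₁.prodMap T₂) :=
  fun x y => Prod.ext (h₁ x.1 y.1) (h₂ x.2 y.2)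

variable {T : (A × B) →L[ℂ] (A × B)}

lemma fst_comp_comp_inl (hT : IsMultiplier T) :
    IsMultiplier (fst ℂ A B ∘L T ∘L inl ℂ A B) :=
  fun a a' => by simpa using congrArg Prod.fst (hT (a, 0) (a', 0))

lemma snd_comp_comp_inr (hT : IsMultiplier T) :
    IsMultiplier (snd ℂ A B ∘L T ∘L inr ℂ A B) :=
  fun b b' => by simpa using congrArg Prod.snd (hT (0, b) (0, b'))

/-- `(0, b) * T (a, 0) = T ((0, b) * (a, 0)) = T 0 = 0`, so `(T (a, 0)).2` annihilates `B`. -/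
lemma snd_apply_inl (hT : IsMultiplier T) (hB : IsSemisimple B) (a : A) : (T (a, 0)).2 = 0 :=
  hB.eq_zero_of_forall_mul_eq_zero _ fun b => by
    simpa [Prod.mk_zero_zero] using congrArg Prod.snd (hT (0, b) (a, 0)).symm

lemma fst_apply_inr (hT : IsMultiplier T) (hA : IsSemisimple A) (b : B) : (T (0, b)).1 = 0 :=
  hA.eq_zero_of_forall_mul_eq_zero _ fun a => by
    simpa [Prod.mk_zero_zero] using congrArg Prod.fst (hT (a, 0) (0, b)).symm

lemma eq_prodMap (hT : IsMultiplier T) (hA : IsSemisimple A) (hB : IsSemisimple B) :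
    T = (fst ℂ A B ∘L T ∘L inl ℂ A B).prodMap (snd ℂ A B ∘L T ∘L inr ℂ A B) := by
  refine ContinuousLinearMap.ext fun ⟨a, b⟩ => ?_
  have hsplit : T (a, b) = T (a, 0) + T (0, b) := by
    rw [← map_add, Prod.mk_add_mk, add_zero, zero_add]
  ext
  · simp [hsplit, hT.fst_apply_inr hA b]
  · simp [hsplit, hT.snd_apply_inl hB a]

end IsMultiplier

theorem isMultiplier_prod_iff_general
    {A B : Type*}
    [NonUnitalCommRing A] [Module ℂ A]
    [UniformSpace A]
    [NonUnitalCommRing B] [Module ℂ B]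
    [UniformSpace B]
    (hAss : IsSemisimple A) (hBss : IsSemisimple B)
    (T : (A × B) →L[ℂ] (A × B)) :
    IsMultiplier T ↔
      ∃ (T₁ : A →L[ℂ] A) (T₂ : B →L[ℂ] B), IsMultiplier T₁ ∧ IsMultiplier T₂ ∧
        ∀ (a : A) (b : B), T (a, b) = (T₁ a, T₂ b) := by
  constructor
  · intro hT
    exact ⟨_, _, hT.fst_comp_comp_inl, hT.snd_comp_comp_inr,
      fun a b => DFunLike.congr_fun (hT.eq_prodMap hAss hBss) (a, b)⟩
  · rintro ⟨T₁, T₂, h₁, h₂, hT⟩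
    have hT_eq : T = T₁.prodMap T₂ := ContinuousLinearMap.ext fun ⟨a, b⟩ => hT a b
    exact hT_eq ▸ h₁.prodMap h₂

/-- Let `A` and `B` be commutative semisimple Fréchet algebras.  A continuous
linear map `T : A × B → A × B` is a multiplier of `A × B` if and only if there exist a
multiplier `T₁` of `A` and a multiplier `T₂` of `B` with `T (a, b) = (T₁ a, T₂ b)` for all
`a`, `b`.  In other words, `M(A ⊕ B) = M(A) ⊕ M(B)`. -/
theorem isMultiplier_prod_iff
    {A B : Type*}
    [NonUnitalCommRing A] [Module ℂ A] [SMulCommClass ℂ A A] [IsScalarTower ℂ A A]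
    [UniformSpace A] [IsUniformAddGroup A]
    [NonUnitalCommRing B] [Module ℂ B] [SMulCommClass ℂ B B] [IsScalarTower ℂ B B]
    [UniformSpace B] [IsUniformAddGroup B]
    (hA : IsFrechetAlgebra A) (hB : IsFrechetAlgebra B)
    (hAss : IsSemisimple A) (hBss : IsSemisimple B)
    (T : (A × B) →L[ℂ] (A × B)) :
    IsMultiplier T ↔
      ∃ (T₁ : A →L[ℂ] A) (T₂ : B →L[ℂ] B), IsMultiplier T₁ ∧ IsMultiplier T₂ ∧
        ∀ (a : A) (b : B), T (a, b) = (T₁ a, T₂ b) :=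
  isMultiplier_prod_iff_general hAss hBss T
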